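/- arXiv:2206.10854 — 2 statements merged into one kernel-verified Lean document; each statement's English description precedes it below -/
import Mathlib

section
/- For 1 ≤ i < j < k < l ≤ n, define S_{ijkl} = (1/2)(M_{i,j}⊗M_{k,l} - M_{i,k}⊗M_{j,l} + M_{i,l}⊗M_{j,k} + M_{k,l}⊗M_{i,j} - M_{j,l}⊗M_{i,k} + M_{j,k}⊗M_{i,l}) ∈ S²(o_n). Under the representation π of o(p,q)⊗ℂ by differential operators (transported via the isomorphism Φ⁻¹ from o_n to o(p,q)⊗ℂ) and symmetrization into U(g), the image of each S_{ijkl} acts as the zero operator on polynomials in x_1,…,x_p, y_1,…,y_q. Concretely: π(Φ⁻¹(M_{i,j}))π(Φ⁻¹(M_{k,l})) - π(Φ⁻¹(M_{i,k}))π(Φ⁻¹(M_{j,l})) + π(Φ⁻¹(M_{i,l}))π(Φ⁻¹(M_{j,k})) = 0 as a differential operator, after symmetrizing each product. -/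
open MvPolynomial

noncomputable section

abbrev PolyPQ (p q : ℕ) := MvPolynomial (Fin p ⊕ Fin q) ℂ

noncomputable def mulOp {p q : ℕ} (f : PolyPQ p q) : Module.End ℂ (PolyPQ p q) :=
  LinearMap.mulLeft ℂ f

noncomputable def DOp {p q : ℕ} (i : Fin p ⊕ Fin q) : Module.End ℂ (PolyPQ p q) :=
  (pderiv i).toLinearMap

def idx (p q : ℕ) (i : Fin (p + q)) : Fin p ⊕ Fin q :=
  if h : (i : ℕ) < p then Sum.inl ⟨i, h⟩ else Sum.inr ⟨(i : ℕ) - p, by omega⟩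

/-- π on the generators X_{i,j} (the oscillator-type representation). -/
noncomputable def piGen (p q : ℕ) (i j : Fin (p + q)) : Module.End ℂ (PolyPQ p q) :=
  if (i : ℕ) < p then
    if (j : ℕ) < p then
      mulOp (X (idx p q i)) * DOp (idx p q j) - mulOp (X (idx p q j)) * DOp (idx p q i)
    else
      -Complex.I • (mulOp (X (idx p q i)) * mulOp (X (idx p q j)) +
        DOp (idx p q i) * DOp (idx p q j))
  else
    if (j : ℕ) < p then
      Complex.I • (mulOp (X (idx p q j)) * mulOp (X (idx p q i)) +
        DOp (idx p q j) * DOp (idx p q i))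
    else
      mulOp (X (idx p q j)) * DOp (idx p q i) - mulOp (X (idx p q i)) * DOp (idx p q j)

/-- π(Φ⁻¹(M_{i,j})): since Φ(X_{i,j}) = M_{i,j}, -M_{i,j}, √-1·M_{i,j} in the three cases,
Φ⁻¹(M_{i,j}) = X_{i,j}, -X_{i,j}, -√-1·X_{i,j} respectively. -/
noncomputable def piM (p q : ℕ) (i j : Fin (p + q)) : Module.End ℂ (PolyPQ p q) :=
  if (i : ℕ) < p ∧ (j : ℕ) < p then piGen p q i j
  else if p ≤ (i : ℕ) ∧ p ≤ (j : ℕ) then -piGen p q i j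
  else (-Complex.I) • piGen p q i j

/-- The symmetrized product (1/2)(AB + BA). -/
noncomputable def symProd {p q : ℕ} (A B : Module.End ℂ (PolyPQ p q)) :
    Module.End ℂ (PolyPQ p q) :=
  ((1 : ℂ) / 2) • (A * B + B * A)

/-! ### Auxiliary material -/

theorem pderiv_comm' {σ R : Type*} [CommSemiring R] (a b : σ) (f : MvPolynomial σ R) :
    pderiv a (pderiv b f) = pderiv b (pderiv a f) := by
  classical
  induction f using MvPolynomial.induction_on with
  | C c => simp
  | add p q hp hq => simp [hp, hq]
  | mul_X p n ih =>
      simp only [pderiv_mul, ih, Pi.single_apply, pderiv_X, map_add]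
      split_ifs <;> simp [ih] <;> ring

theorem plucker {R : Type*} [Ring R] (a b c d w x y z : R)
    (hax : Commute a x) (hay : Commute a y) (haz : Commute a z)
    (hbw : Commute b w) (hby : Commute b y) (hbz : Commute b z)
    (hcw : Commute c w) (hcx : Commute c x) (hcz : Commute c z)
    (hdw : Commute d w) (hdx : Commute d x) (hdy : Commute d y)
    (hab : Commute a b) (hac : Commute a c) (had : Commute a d)
    (hbc : Commute b c) (hbd : Commute b d) (hcd : Commute c d)
    (hwx : Commute w x) (hwy : Commute w y) (hwz : Commute w z)
    (hxy : Commute x y) (hxz : Commute x z) (hyz : Commute y z) :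
    (a*x - b*w)*(c*z - d*y) - (a*y - c*w)*(b*z - d*x) + (a*z - d*w)*(b*y - c*x) = 0 := by
  have h1 : a*x*(c*z) = a*z*(c*x) := by
    rw [hcx.symm.mul_mul_mul_comm, hcz.symm.mul_mul_mul_comm, hxz.eq]
  have h2 : a*x*(d*y) = a*y*(d*x) := by
    rw [hdx.symm.mul_mul_mul_comm, hdy.symm.mul_mul_mul_comm, hxy.eq]
  have h3 : b*w*(c*z) = c*w*(b*z) := by
    rw [hcw.symm.mul_mul_mul_comm, hbw.symm.mul_mul_mul_comm, hbc.eq]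
  have h4 : b*w*(d*y) = d*w*(b*y) := by
    rw [hdw.symm.mul_mul_mul_comm, hbw.symm.mul_mul_mul_comm, hbd.eq]
  have h5 : a*y*(b*z) = a*z*(b*y) := by
    rw [hby.symm.mul_mul_mul_comm, hbz.symm.mul_mul_mul_comm, hyz.eq]
  have h6 : c*w*(d*x) = d*w*(c*x) := by
    rw [hdw.symm.mul_mul_mul_comm, hcw.symm.mul_mul_mul_comm, hcd.eq]
  have E : (a*x - b*w)*(c*z - d*y) - (a*y - c*w)*(b*z - d*x) + (a*z - d*w)*(b*y - c*x)
      = (a*x*(c*z) - a*x*(d*y) - b*w*(c*z) + b*w*(d*y))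
      - (a*y*(b*z) - a*y*(d*x) - c*w*(b*z) + c*w*(d*x))
      + (a*z*(b*y) - a*z*(c*x) - d*w*(b*y) + d*w*(c*x)) := by noncomm_ring
  rw [E, h1, h2, h3, h4, h5, h6]
  abel

noncomputable def Uop (p q : ℕ) (i : Fin (p + q)) : Module.End ℂ (PolyPQ p q) :=
  if (i : ℕ) < p then mulOp (X (idx p q i)) else DOp (idx p q i)

noncomputable def Vop (p q : ℕ) (i : Fin (p + q)) : Module.End ℂ (PolyPQ p q) :=
  if (i : ℕ) < p then DOp (idx p q i) else -mulOp (X (idx p q i))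

theorem idx_ne {p q : ℕ} {i j : Fin (p + q)} (h : i ≠ j) : idx p q i ≠ idx p q j := by
  intro hc
  apply h
  have : (i : ℕ) = (j : ℕ) := by
    unfold idx at hc
    split_ifs at hc <;> simp_all [Sum.inl.injEq, Sum.inr.injEq, Fin.mk.injEq] <;> omega
  exact Fin.ext this

theorem commXX {p q : ℕ} (a b : Fin p ⊕ Fin q) :
    Commute (mulOp (p := p) (q := q) (X a)) (mulOp (X b)) := by
  apply LinearMap.ext
  intro f
  simp only [mulOp, Module.End.mul_apply, LinearMap.mulLeft_apply]
  ring

theorem commDD {p q : ℕ} (a b : Fin p ⊕ Fin q) :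
    Commute (DOp (p := p) (q := q) a) (DOp b) := by
  apply LinearMap.ext
  intro f
  exact pderiv_comm' a b f

theorem commDX {p q : ℕ} {a b : Fin p ⊕ Fin q} (h : a ≠ b) :
    Commute (DOp (p := p) (q := q) a) (mulOp (X b)) := by
  apply LinearMap.ext
  intro f
  simp [DOp, mulOp, Module.End.mul_apply, pderiv_mul, pderiv_X_of_ne (Ne.symm h)]

theorem commUU {p q : ℕ} {i j : Fin (p + q)} (h : i ≠ j) :
    Commute (Uop p q i) (Uop p q j) := by
  unfold Uop
  split_ifs
  · exact commXX _ _
  · exact (commDX (idx_ne h.symm)).symm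
  · exact commDX (idx_ne h)
  · exact commDD _ _

theorem commUV {p q : ℕ} {i j : Fin (p + q)} (h : i ≠ j) :
    Commute (Uop p q i) (Vop p q j) := by
  unfold Uop Vop
  split_ifs
  · exact (commDX (idx_ne h.symm)).symm
  · exact (commXX (idx p q i) (idx p q j)).neg_right
  · exact commDD _ _
  · exact (commDX (idx_ne h)).neg_right

theorem commVV {p q : ℕ} {i j : Fin (p + q)} (h : i ≠ j) :
    Commute (Vop p q i) (Vop p q j) := by
  unfold Vop
  split_ifs
  · exact commDD _ _
  · exact (commDX (idx_ne h)).neg_right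
  · exact ((commDX (idx_ne h.symm)).symm).neg_left
  · exact ((commXX (idx p q i) (idx p q j)).neg_left).neg_right

theorem commVU {p q : ℕ} {i j : Fin (p + q)} (h : i ≠ j) :
    Commute (Vop p q i) (Uop p q j) :=
  (commUV h.symm).symm

theorem piM_eq {p q : ℕ} {i j : Fin (p + q)} (h : i ≠ j) :
    piM p q i j = Uop p q i * Vop p q j - Uop p q j * Vop p q i := by
  have hIJ : idx p q i ≠ idx p q j := idx_ne h
  have hDD : DOp (idx p q j) * DOp (idx p q i) = DOp (idx p q i) * DOp (idx p q j) :=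
    (commDD _ _).eq
  have hDX : DOp (idx p q i) * mulOp (X (idx p q j))
      = mulOp (X (idx p q j)) * DOp (idx p q i) := (commDX hIJ).eq
  have hDX' : DOp (idx p q j) * mulOp (X (idx p q i))
      = mulOp (X (idx p q i)) * DOp (idx p q j) := (commDX (Ne.symm hIJ)).eq
  have mn : ∀ A B : Module.End ℂ (PolyPQ p q), A * -B = -(A * B) := fun A B => mul_neg A B
  unfold piM piGen Uop Vop
  rcases lt_or_ge (i : ℕ) p with hi | hi <;> rcases lt_or_ge (j : ℕ) p with hj | hj
  · simp [hi, hj]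
  · simp only [hi, hj, if_true, ite_true, ite_false, not_lt.2 hj, true_and, and_true,
      hj.not_gt, and_false, false_and, if_false, hi.not_ge]
    rw [smul_smul, show (-Complex.I) * (-Complex.I) = (-1 : ℂ) by
      rw [neg_mul_neg, Complex.I_mul_I], neg_one_smul, mn, hDD]
    abel
  · simp only [not_lt.2 hi, hj, ite_true, ite_false, hi.not_gt, false_and, hj.not_ge,
      and_false]
    rw [smul_smul, show (-Complex.I) * Complex.I = (1 : ℂ) by
      rw [neg_mul, Complex.I_mul_I, neg_neg], one_smul, mn, hDD]
    abel
  · simp only [not_lt.2 hi, not_lt.2 hj, ite_false, hi.not_gt, hj.not_gt, false_and,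
      if_false, hi, hj, true_and, and_true, if_true, ite_true]
    rw [mn, mn, hDX, hDX']
    abel

theorem symProd_of_commute {p q : ℕ} {A B : Module.End ℂ (PolyPQ p q)}
    (h : Commute A B) : symProd A B = A * B := by
  rw [symProd, ← h.eq, ← two_smul ℂ (A * B), smul_smul]
  norm_num

/-- The elements S_{ijkl} act as zero under π: the alternating sum of symmetrized products
π(Φ⁻¹(M_{i,j}))π(Φ⁻¹(M_{k,l})) - π(Φ⁻¹(M_{i,k}))π(Φ⁻¹(M_{j,l})) + π(Φ⁻¹(M_{i,l}))π(Φ⁻¹(M_{j,k}))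
vanishes. -/
theorem Sijkl_acts_as_zero (p q : ℕ) :
    ∀ i j k l : Fin (p + q), i < j → j < k → k < l →
      symProd (piM p q i j) (piM p q k l) - symProd (piM p q i k) (piM p q j l) +
        symProd (piM p q i l) (piM p q j k) = 0 := by
  intro i j k l hij hjk hkl
  have hik : i < k := hij.trans hjk
  have hjl : j < l := hjk.trans hkl
  have hil : i < l := hij.trans hjl
  have key : ∀ s t u v : Fin (p + q), s ≠ u → s ≠ v → t ≠ u → t ≠ v →
      Commute (Uop p q s * Vop p q t - Uop p q t * Vop p q s)
        (Uop p q u * Vop p q v - Uop p q v * Vop p q u) := by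
    intro s t u v h1 h2 h3 h4
    apply Commute.sub_left <;> apply Commute.sub_right <;>
      apply Commute.mul_left <;> apply Commute.mul_right <;>
      solve_by_elim [commUU, commUV, commVU, commVV, h1, h2, h3, h4, Ne.symm]
  rw [piM_eq hij.ne, piM_eq hkl.ne, piM_eq hik.ne, piM_eq hjl.ne, piM_eq hil.ne,
    piM_eq hjk.ne,
    symProd_of_commute (key i j k l hik.ne hil.ne hjk.ne hjl.ne),
    symProd_of_commute (key i k j l hij.ne hil.ne hjk.ne' hkl.ne),
    symProd_of_commute (key i l j k hij.ne hik.ne hjl.ne' hkl.ne')]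
  exact plucker _ _ _ _ _ _ _ _
    (commUV hij.ne) (commUV hik.ne) (commUV hil.ne)
    (commUV hij.ne') (commUV hjk.ne) (commUV hjl.ne)
    (commUV hik.ne') (commUV hjk.ne') (commUV hkl.ne)
    (commUV hil.ne') (commUV hjl.ne') (commUV hkl.ne')
    (commUU hij.ne) (commUU hik.ne) (commUU hil.ne)
    (commUU hjk.ne) (commUU hjl.ne) (commUU hkl.ne)
    (commVV hij.ne) (commVV hik.ne) (commVV hil.ne)
    (commVV hjk.ne) (commVV hjl.ne) (commVV hkl.ne)
end
end

section
/- Under the representation π of o(p,q)⊗ℂ by differential operators, the Casimir element Ω_g = Σ_{i<j} X_{i,j}X_{i,j}^∨ acts as (E_x - E_y)² + (p-q)(E_x - E_y) - 2(E_x + E_y) - (r_x²r_y² + r_x²Δ_x + r_y²Δ_y + Δ_xΔ_y) - pq. -/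
/-!
The operators `x_i` (multiplication) and `∂_i` satisfy the canonical commutation relations
`[∂_i, x_j] = δ_ij`, and the identity is a consequence of these alone. On the two diagonal
blocks `π(X_{a,b}) π(X_{a,b}^∨) = -L_{a,b}²` with `L_{a,b} = x_a ∂_b - x_b ∂_a`, and on the
mixed block it is `-(x_a y_b + ∂_{x_a} ∂_{y_b})²`, the sign of the dual being absorbed by
`(-√-1)² = -1`.
Normal ordering gives `∑_{a<b} L_{a,b}² = r² Δ - E² - (n - 2) E` on each block and
`∑_{a,b} (x_a y_b + ∂_{x_a} ∂_{y_b})² = r_x² r_y² + Δ_x Δ_y + 2 E_x E_y + q E_x + p E_y + p q`;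
adding the three blocks and using that `E_x` and `E_y` commute gives the formula.
-/

open MvPolynomial

noncomputable section

noncomputable def Ex (p q : ℕ) : Module.End ℂ (PolyPQ p q) :=
  ∑ i : Fin p, mulOp (X (Sum.inl i)) * DOp (Sum.inl i)

noncomputable def Ey (p q : ℕ) : Module.End ℂ (PolyPQ p q) :=
  ∑ j : Fin q, mulOp (X (Sum.inr j)) * DOp (Sum.inr j)

noncomputable def rx2 (p q : ℕ) : Module.End ℂ (PolyPQ p q) :=
  mulOp (∑ i : Fin p, X (Sum.inl i) ^ 2)

noncomputable def ry2 (p q : ℕ) : Module.End ℂ (PolyPQ p q) :=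
  mulOp (∑ j : Fin q, X (Sum.inr j) ^ 2)

noncomputable def Dx (p q : ℕ) : Module.End ℂ (PolyPQ p q) :=
  ∑ i : Fin p, DOp (Sum.inl i) * DOp (Sum.inl i)

noncomputable def Dy (p q : ℕ) : Module.End ℂ (PolyPQ p q) :=
  ∑ j : Fin q, DOp (Sum.inr j) * DOp (Sum.inr j)

/-- π of the dual generator X_{i,j}^∨: -X_{i,j} if i,j both in [p] or both in p+[q],
X_{i,j} otherwise. -/
noncomputable def piVee (p q : ℕ) (i j : Fin (p + q)) : Module.End ℂ (PolyPQ p q) :=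
  if ((i : ℕ) < p ∧ (j : ℕ) < p) ∨ (p ≤ (i : ℕ) ∧ p ≤ (j : ℕ)) then -piGen p q i j
  else piGen p q i j

open scoped Matrix

theorem Finset.sum_ite_lt_add_swap {ι M : Type*} [Fintype ι] [LinearOrder ι] [AddCommMonoid M]
    (f : ι → ι → M) (hf : ∀ a, f a a = 0) :
    ∑ a, ∑ b, (if a < b then f a b + f b a else 0) = ∑ a, ∑ b, f a b := by
  have split : ∀ a b, f a b = (if a < b then f a b else 0) + if b < a then f a b else 0 := by
    intro a b
    rcases lt_trichotomy a b with h | rfl | h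
    · simp [h, h.not_gt]
    · simp [hf]
    · simp [h, h.not_gt]
  rw [Fintype.sum_congr _ _ fun a => Fintype.sum_congr _ _ (split a)]
  simp only [ite_add_zero, Finset.sum_add_distrib]
  rw [Finset.sum_comm (f := fun a b => if b < a then f a b else 0)]

structure IsWeylFamily {ι A : Type*} [Ring A] (x d : ι → A) : Prop where
  commute_x : ∀ i j, Commute (x i) (x j)
  commute_d : ∀ i j, Commute (d i) (d j)
  commute_d_x : ∀ i j, i ≠ j → Commute (d i) (x j)
  d_mul_x_self : ∀ i, d i * x i = x i * d i + 1

section Generators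

variable {ι κ A : Type*} [Ring A]

def angularMomentum (x d : ι → A) (a b : ι) : A := x a * d b - x b * d a

theorem angularMomentum_swap (x d : ι → A) (a b : ι) :
    angularMomentum x d b a = -angularMomentum x d a b :=
  (neg_sub _ _).symm

def mixedGen (x d : ι ⊕ κ → A) (a : ι) (b : κ) : A :=
  x (.inl a) * x (.inr b) + d (.inl a) * d (.inr b)

end Generators

namespace IsWeylFamily

section

variable {ι κ A : Type*} [Ring A] {x d : ι → A}

theorem comp (h : IsWeylFamily x d) {f : κ → ι} (hf : f.Injective) :
    IsWeylFamily (x ∘ f) (d ∘ f) where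
  commute_x i j := h.commute_x (f i) (f j)
  commute_d i j := h.commute_d (f i) (f j)
  commute_d_x i j hij := h.commute_d_x (f i) (f j) (hf.ne hij)
  d_mul_x_self i := h.d_mul_x_self (f i)

theorem d_mul_x [DecidableEq ι] (h : IsWeylFamily x d) (i j : ι) :
    d i * x j = x j * d i + if i = j then 1 else 0 := by
  split_ifs with hij
  · subst hij; exact h.d_mul_x_self i
  · rw [add_zero, (h.commute_d_x i j hij).eq]

theorem x_mul_d_mul_x_mul_d [DecidableEq ι] (h : IsWeylFamily x d) (a b c e : ι) :
    x a * d b * (x c * d e) = x a * x c * (d b * d e) + if b = c then x a * d e else 0 := by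
  calc x a * d b * (x c * d e) = x a * (d b * x c) * d e := by simp only [mul_assoc]
    _ = _ := by rw [h.d_mul_x]; split_ifs <;> noncomm_ring

variable [Fintype ι]

theorem dotProduct_mul_self (h : IsWeylFamily x d) :
    (x ⬝ᵥ d) * (x ⬝ᵥ d) = ∑ a, ∑ b, x a * x b * (d a * d b) + x ⬝ᵥ d := by
  classical
  simp only [dotProduct, Finset.sum_mul_sum, h.x_mul_d_mul_x_mul_d, Finset.sum_add_distrib,
    Finset.sum_ite_eq, Finset.mem_univ, if_true]

theorem sum_lt_angularMomentum_mul_self [LinearOrder ι] (h : IsWeylFamily x d) :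
    ∑ a, ∑ b, (if a < b then angularMomentum x d a b * angularMomentum x d a b else 0) =
      (x ⬝ᵥ x) * (d ⬝ᵥ d) + 2 • (x ⬝ᵥ d) - (x ⬝ᵥ d) * (x ⬝ᵥ d) - Fintype.card ι • (x ⬝ᵥ d) := by
  -- `L a b * L a b = P a b + P b a` with `P a a = 0`, so no division by 2 is needed.
  set P : ι → ι → A := fun a b => x a * d b * (x a * d b) - x a * d b * (x b * d a)
  have hL : ∀ a b, angularMomentum x d a b * angularMomentum x d a b = P a b + P b a := by
    intro a b; simp only [angularMomentum, P]; noncomm_ring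
  simp only [hL]
  rw [Finset.sum_ite_lt_add_swap P fun a => sub_self _, h.dotProduct_mul_self]
  simp only [P, h.x_mul_d_mul_x_mul_d, (h.commute_d _ _).eq, Finset.sum_sub_distrib,
    Finset.sum_add_distrib, Finset.sum_ite_eq', Finset.mem_univ, if_true, Finset.sum_const,
    Finset.card_univ, dotProduct, Finset.sum_mul_sum, ← Finset.smul_sum]
  abel

end

variable {ι κ A : Type*} [Ring A] {x d : ι ⊕ κ → A}

theorem mixedGen_mul_self (h : IsWeylFamily x d) (a : ι) (b : κ) :
    mixedGen x d a b * mixedGen x d a b =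
      x (.inl a) * x (.inl a) * (x (.inr b) * x (.inr b)) +
        d (.inl a) * d (.inl a) * (d (.inr b) * d (.inr b)) +
        2 • (x (.inl a) * d (.inl a) * (x (.inr b) * d (.inr b))) +
        x (.inl a) * d (.inl a) + x (.inr b) * d (.inr b) + 1 := by
  have hPB := h.commute_d_x (.inl a) (.inr b) Sum.inl_ne_inr
  have hQA := h.commute_d_x (.inr b) (.inl a) Sum.inr_ne_inl
  have hPQ : d (.inl a) * d (.inr b) * (x (.inl a) * x (.inr b)) =
      (x (.inl a) * d (.inl a) + 1) * (x (.inr b) * d (.inr b) + 1) := by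
    rw [hQA.mul_mul_mul_comm, h.d_mul_x_self, h.d_mul_x_self]
  rw [mixedGen, add_mul, mul_add, mul_add, (h.commute_x _ _).mul_mul_mul_comm,
    hPB.symm.mul_mul_mul_comm, (h.commute_d _ _).mul_mul_mul_comm, hPQ]
  noncomm_ring

theorem commute_dotProduct_inl_inr [Fintype ι] [Fintype κ] (h : IsWeylFamily x d) :
    Commute ((x ∘ .inl) ⬝ᵥ (d ∘ .inl)) ((x ∘ .inr) ⬝ᵥ (d ∘ .inr)) :=
  Commute.sum_left _ _ _ fun _ _ => Commute.sum_right _ _ _ fun _ _ =>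
    ((h.commute_x _ _).mul_right (h.commute_d_x _ _ Sum.inr_ne_inl).symm).mul_left
      ((h.commute_d_x _ _ Sum.inl_ne_inr).mul_right (h.commute_d _ _))

theorem sum_mixedGen_mul_self [Fintype ι] [Fintype κ] (h : IsWeylFamily x d) :
    ∑ a, ∑ b, mixedGen x d a b * mixedGen x d a b =
      ((x ∘ .inl) ⬝ᵥ (x ∘ .inl)) * ((x ∘ .inr) ⬝ᵥ (x ∘ .inr)) +
        ((d ∘ .inl) ⬝ᵥ (d ∘ .inl)) * ((d ∘ .inr) ⬝ᵥ (d ∘ .inr)) +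
        2 • (((x ∘ .inl) ⬝ᵥ (d ∘ .inl)) * ((x ∘ .inr) ⬝ᵥ (d ∘ .inr))) +
        Fintype.card κ • ((x ∘ .inl) ⬝ᵥ (d ∘ .inl)) + Fintype.card ι • ((x ∘ .inr) ⬝ᵥ (d ∘ .inr)) +
        (Fintype.card ι * Fintype.card κ) • 1 := by
  simp only [h.mixedGen_mul_self, Finset.sum_add_distrib, Finset.sum_const, Finset.card_univ,
    dotProduct, Function.comp_apply, Finset.sum_mul_sum, ← Finset.smul_sum, mul_smul]

end IsWeylFamily

theorem MvPolynomial.pderiv_pderiv_comm {σ R : Type*} [CommSemiring R] (i j : σ)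
    (f : MvPolynomial σ R) : pderiv i (pderiv j f) = pderiv j (pderiv i f) := by
  classical
  induction f using MvPolynomial.induction_on with
  | C a => simp
  | add f g hf hg => simp [hf, hg]
  | mul_X f k hf =>
    have pderiv_pderiv_X : ∀ a b, pderiv a (pderiv b (X k : MvPolynomial σ R)) = 0 := by
      intro a b
      rw [pderiv_X, Pi.single_apply]
      split_ifs <;> simp
    simp only [pderiv_mul, map_add, hf, pderiv_pderiv_X]
    ring

def xOp (p q : ℕ) (i : Fin p ⊕ Fin q) : Module.End ℂ (PolyPQ p q) := mulOp (X i)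

section Operators

variable {p q : ℕ}

theorem mulOp_mul (f g : PolyPQ p q) : mulOp (f * g) = mulOp f * mulOp g :=
  map_mul (Algebra.lmul ℂ (PolyPQ p q)) f g

theorem mulOp_sum {α : Type*} (s : Finset α) (f : α → PolyPQ p q) :
    mulOp (∑ a ∈ s, f a) = ∑ a ∈ s, mulOp (f a) :=
  map_sum (Algebra.lmul ℂ (PolyPQ p q)) f s

theorem isWeylFamily_xOp_DOp : IsWeylFamily (xOp p q) DOp where
  commute_x i j := by simp only [Commute, SemiconjBy, xOp, ← mulOp_mul, mul_comm]
  commute_d i j := LinearMap.ext fun f => pderiv_pderiv_comm i j f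
  commute_d_x i j hij := LinearMap.ext fun f => by
    simp [xOp, DOp, mulOp, pderiv_X_of_ne hij.symm]
  d_mul_x_self i := LinearMap.ext fun f => by
    simp [xOp, DOp, mulOp, add_comm]

theorem idx_castAdd (a : Fin p) : idx p q (Fin.castAdd q a) = .inl a := by
  simp [idx]

theorem idx_natAdd (b : Fin q) : idx p q (Fin.natAdd p b) = .inr b := by
  simp [idx]

theorem piGen_castAdd_castAdd (a b : Fin p) :
    piGen p q (Fin.castAdd q a) (Fin.castAdd q b) =
      angularMomentum (xOp p q ∘ .inl) (DOp ∘ .inl) a b := by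
  rw [piGen, if_pos (Fin.castAdd_lt q a), if_pos (Fin.castAdd_lt q b), idx_castAdd, idx_castAdd]
  rfl

theorem piGen_natAdd_natAdd (a b : Fin q) :
    piGen p q (Fin.natAdd p a) (Fin.natAdd p b) =
      angularMomentum (xOp p q ∘ .inr) (DOp ∘ .inr) b a := by
  rw [piGen, if_neg (Fin.le_coe_natAdd p a).not_gt, if_neg (Fin.le_coe_natAdd p b).not_gt,
    idx_natAdd, idx_natAdd]
  rfl

theorem piGen_castAdd_natAdd (a : Fin p) (b : Fin q) :
    piGen p q (Fin.castAdd q a) (Fin.natAdd p b) =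
      -Complex.I • mixedGen (xOp p q) DOp a b := by
  rw [piGen, if_pos (Fin.castAdd_lt q a), if_neg (Fin.le_coe_natAdd p b).not_gt, idx_castAdd,
    idx_natAdd]
  rfl

theorem piVee_castAdd_castAdd (a b : Fin p) :
    piVee p q (Fin.castAdd q a) (Fin.castAdd q b) =
      -piGen p q (Fin.castAdd q a) (Fin.castAdd q b) :=
  if_pos (.inl ⟨Fin.castAdd_lt q a, Fin.castAdd_lt q b⟩)

theorem piVee_natAdd_natAdd (a b : Fin q) :
    piVee p q (Fin.natAdd p a) (Fin.natAdd p b) = -piGen p q (Fin.natAdd p a) (Fin.natAdd p b) :=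
  if_pos (.inr ⟨Fin.le_coe_natAdd p a, Fin.le_coe_natAdd p b⟩)

theorem piVee_castAdd_natAdd (a : Fin p) (b : Fin q) :
    piVee p q (Fin.castAdd q a) (Fin.natAdd p b) = piGen p q (Fin.castAdd q a) (Fin.natAdd p b) :=
  if_neg <| by
    have := Fin.castAdd_lt q a
    have := Fin.le_coe_natAdd p b
    omega

def casimirTerm (p q : ℕ) (i j : Fin (p + q)) : Module.End ℂ (PolyPQ p q) :=
  if i < j then piGen p q i j * piVee p q i j else 0

theorem casimirTerm_castAdd_castAdd (a b : Fin p) :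
    casimirTerm p q (Fin.castAdd q a) (Fin.castAdd q b) =
      -if a < b then
        angularMomentum (xOp p q ∘ .inl) (DOp ∘ .inl) a b *
          angularMomentum (xOp p q ∘ .inl) (DOp ∘ .inl) a b
      else 0 := by
  -- Without `α`, `rw` does not match `LinearMap`'s negation against the ring's.
  rw [casimirTerm, piVee_castAdd_castAdd, piGen_castAdd_castAdd,
    mul_neg (α := Module.End ℂ (PolyPQ p q))]
  simp only [(Fin.strictMono_castAdd q).lt_iff_lt, neg_ite, neg_zero]

theorem casimirTerm_natAdd_natAdd (a b : Fin q) :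
    casimirTerm p q (Fin.natAdd p a) (Fin.natAdd p b) =
      -if a < b then
        angularMomentum (xOp p q ∘ .inr) (DOp ∘ .inr) a b *
          angularMomentum (xOp p q ∘ .inr) (DOp ∘ .inr) a b
      else 0 := by
  rw [casimirTerm, piVee_natAdd_natAdd, piGen_natAdd_natAdd, angularMomentum_swap,
    neg_neg, neg_mul (α := Module.End ℂ (PolyPQ p q))]
  simp only [Fin.natAdd_lt_natAdd_iff, neg_ite, neg_zero]

theorem casimirTerm_castAdd_natAdd (a : Fin p) (b : Fin q) :
    casimirTerm p q (Fin.castAdd q a) (Fin.natAdd p b) =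
      -(mixedGen (xOp p q) DOp a b * mixedGen (xOp p q) DOp a b) := by
  have hlt : Fin.castAdd q a < Fin.natAdd p b :=
    (Fin.castAdd_lt q a).trans_le (Fin.le_coe_natAdd p b)
  rw [casimirTerm, if_pos hlt, piVee_castAdd_natAdd, piGen_castAdd_natAdd, smul_mul_smul_comm,
    neg_mul_neg, Complex.I_mul_I]
  exact neg_one_smul ℂ (_ : Module.End ℂ (PolyPQ p q))

theorem casimirTerm_natAdd_castAdd (a : Fin q) (b : Fin p) :
    casimirTerm p q (Fin.natAdd p a) (Fin.castAdd q b) = 0 :=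
  if_neg ((Fin.castAdd_lt q b).trans_le (Fin.le_coe_natAdd p a)).not_gt

theorem rx2_eq_dotProduct : rx2 p q = (xOp p q ∘ .inl) ⬝ᵥ (xOp p q ∘ .inl) := by
  simp only [rx2, mulOp_sum, sq, mulOp_mul]
  rfl

theorem ry2_eq_dotProduct : ry2 p q = (xOp p q ∘ .inr) ⬝ᵥ (xOp p q ∘ .inr) := by
  simp only [ry2, mulOp_sum, sq, mulOp_mul]
  rfl

theorem Ex_eq_dotProduct : Ex p q = (xOp p q ∘ .inl) ⬝ᵥ (DOp ∘ .inl) := rfl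

theorem Ey_eq_dotProduct : Ey p q = (xOp p q ∘ .inr) ⬝ᵥ (DOp ∘ .inr) := rfl

theorem Dx_eq_dotProduct : Dx p q = (DOp ∘ .inl) ⬝ᵥ (DOp ∘ .inl) := rfl

theorem Dy_eq_dotProduct : Dy p q = (DOp ∘ .inr) ⬝ᵥ (DOp ∘ .inr) := rfl

end Operators

/-- The Casimir Ω_g = Σ_{i<j} X_{i,j} X_{i,j}^∨ acts under π as the stated operator. -/
theorem casimir_g_action (p q : ℕ) :
    (∑ i : Fin (p + q), ∑ j : Fin (p + q),
        if i < j then piGen p q i j * piVee p q i j else 0) =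
      (Ex p q - Ey p q) * (Ex p q - Ey p q) + ((p : ℂ) - (q : ℂ)) • (Ex p q - Ey p q) -
        (2 : ℂ) • (Ex p q + Ey p q) -
        (rx2 p q * ry2 p q + rx2 p q * Dx p q + ry2 p q * Dy p q + Dx p q * Dy p q) -
        ((p : ℂ) * (q : ℂ)) • 1 := by
  have hW : IsWeylFamily (xOp p q) DOp := isWeylFamily_xOp_DOp
  change ∑ i, ∑ j, casimirTerm p q i j = _
  simp only [Fin.sum_univ_add, casimirTerm_castAdd_castAdd, casimirTerm_castAdd_natAdd,
    casimirTerm_natAdd_castAdd, casimirTerm_natAdd_natAdd, Finset.sum_neg_distrib,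
    Finset.sum_const_zero, Finset.sum_add_distrib]
  rw [(hW.comp Sum.inl_injective).sum_lt_angularMomentum_mul_self,
    (hW.comp Sum.inr_injective).sum_lt_angularMomentum_mul_self, hW.sum_mixedGen_mul_self,
    rx2_eq_dotProduct, ry2_eq_dotProduct, Ex_eq_dotProduct, Ey_eq_dotProduct,
    Dx_eq_dotProduct, Dy_eq_dotProduct, sub_mul, mul_sub, mul_sub,
    ← hW.commute_dotProduct_inl_inr.eq]
  simp only [Fintype.card_fin]
  module
end
end
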